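/- Suppose μ is a probability measure on S^{n−1} satisfying the ACW(θ, α) condition. Let x ∈ ℝⁿ be nonzero, δ > 0, and let x₀ satisfy ‖x₀ − x‖₂ ≤ δ‖x‖₂ and make an angle less than θ with x. Let X_k denote the k-th iterate of the generalized randomized Kaczmarz method with respect to μ started from x₀, and let Ω be the event that for every k ∈ ℤ₊, X_k makes an angle less than θ with x. Then for every k ∈ ℤ₊, E[‖X_k − x‖₂²·1_Ω] ≤ (1 − α/n)^k·‖x₀ − x‖₂², and moreover P(Ωᶜ) ≤ (δ/sin θ)². -/

import Mathlib

open MeasureTheory ProbabilityTheory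
open scoped RealInnerProductSpace ENNReal BigOperators

noncomputable section

/-- `ℝⁿ` with the Euclidean structure. -/
abbrev Euc (n : ℕ) := EuclideanSpace ℝ (Fin n)

/-- The sign function used in the paper: `sgn t = 1` if `t ≥ 0` and `-1` otherwise. -/
def sgn (t : ℝ) : ℝ := if 0 ≤ t then 1 else -1

/-- One (generalized) Kaczmarz step for phase retrieval with signal `x`,
measurement vector `a`, applied to the current iterate `z`:
`Pz = z + (sign(⟨a,z⟩)·|⟨a,x⟩| − ⟨a,z⟩) a`. -/
def kacStep {n : ℕ} (x a z : Euc n) : Euc n :=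
  z + (sgn ⟪a, z⟫ * |⟪a, x⟫| - ⟪a, z⟫) • a

/-- The randomized Kaczmarz iterates `X_k = P_k ⋯ P_1 x₀`, where step `k+1`
uses the measurement vector `a k`. -/
def kacIter {n : ℕ} (x : Euc n) (a : ℕ → Euc n) (x0 : Euc n) : ℕ → Euc n
  | 0 => x0
  | k + 1 => kacStep x (a k) (kacIter x a x0 k)

/-- The spherical wedge `W_{x,z}`: points of the unit sphere where the signs of
`⟨v,x⟩` and `⟨v,z⟩` disagree. -/
def wedge {n : ℕ} (x z : Euc n) : Set (Euc n) :=
  {v | v ∈ Metric.sphere (0 : Euc n) 1 ∧ sgn ⟪v, x⟫ ≠ sgn ⟪v, z⟫}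

/-- The matrix `E_{a∼μ}[a aᵀ]`. -/
def covMat {n : ℕ} (μ : Measure (Euc n)) : Matrix (Fin n) (Fin n) ℝ :=
  Matrix.of fun i j => ∫ a, a i * a j ∂μ

/-- The matrix `E_{a∼μ}[a aᵀ 1_W(a)]`. -/
def covMatOn {n : ℕ} (μ : Measure (Euc n)) (W : Set (Euc n)) : Matrix (Fin n) (Fin n) ℝ :=
  Matrix.of fun i j => ∫ a in W, a i * a j ∂μ

/-- The quadratic form `vᵀ M v` of a matrix. -/
def quadForm {n : ℕ} (M : Matrix (Fin n) (Fin n) ℝ) (v : Euc n) : ℝ :=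
  ∑ i, ∑ j, v i * M i j * v j

/-- The smallest eigenvalue of a symmetric matrix, via the Rayleigh quotient
characterization `λ_min(M) = inf_{‖v‖=1} vᵀMv`. -/
def lamMin {n : ℕ} (M : Matrix (Fin n) (Fin n) ℝ) : ℝ :=
  ⨅ v : {v : Euc n // ‖v‖ = 1}, quadForm M (v : Euc n)

/-- The largest eigenvalue of a symmetric matrix, via the Rayleigh quotient
characterization `λ_max(M) = sup_{‖v‖=1} vᵀMv`. -/
def lamMax {n : ℕ} (M : Matrix (Fin n) (Fin n) ℝ) : ℝ :=
  ⨆ v : {v : Euc n // ‖v‖ = 1}, quadForm M (v : Euc n)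

/-- The uniform probability measure on the unit sphere `S^{n-1} ⊂ ℝⁿ`:
the normalized `(n-1)`-dimensional Hausdorff measure on the sphere. -/
def sphereUniform (n : ℕ) : Measure (Euc n) :=
  (μH[(n : ℝ) - 1] (Metric.sphere (0 : Euc n) 1))⁻¹ •
    (μH[(n : ℝ) - 1]).restrict (Metric.sphere (0 : Euc n) 1)

/-- The `ACW(θ, α)` (anti-concentration on wedges) condition: for every wedge `W`
of angle less than `θ`, `λ_min(E[aaᵀ] − 4 E[aaᵀ 1_W(a)]) ≥ α/n`. -/
def ACW {n : ℕ} (μ : Measure (Euc n)) (θ α : ℝ) : Prop :=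
  ∀ x z : Euc n, x ≠ 0 → z ≠ 0 → InnerProductGeometry.angle x z < θ →
    lamMin (covMat μ - (4 : ℝ) • covMatOn μ (wedge x z)) ≥ α / n

/-- The hitting time `τ = min{k : X_k ∉ B}` (equal to `⊤ = ∞` if the trajectory
never leaves `B`). -/
def hitTime {n : ℕ} (B : Set (Euc n)) (X : ℕ → Euc n) : ℕ∞ :=
  ⨅ j ∈ {j : ℕ | X j ∉ B}, (j : ℕ∞)

/-- The stopped iterate `X_{τ ∧ k}` where `τ = hitTime B`. -/
def stoppedIter {n : ℕ} (x : Euc n) (a : ℕ → Euc n) (x0 : Euc n) (B : Set (Euc n)) (k : ℕ) :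
    Euc n :=
  kacIter x a x0 (min (hitTime B (kacIter x a x0)) (k : ℕ∞)).toNat

/-- The filtration `(F_k)` where `F_k = σ(a_0, …, a_{k-1})` is generated by the
first `k` measurement vectors. -/
def measFiltration {Ω : Type*} {mΩ : MeasurableSpace Ω} {n : ℕ}
    (A : ℕ → Ω → Euc n) (hA : ∀ i, Measurable (A i)) : Filtration ℕ mΩ where
  seq k := ⨆ j ∈ Set.Iio k, MeasurableSpace.comap (A j) inferInstance
  mono' _ _ hij := biSup_mono fun _ ha => lt_of_lt_of_le ha hij
  le' _ := iSup₂_le fun j _ => measurable_iff_comap_le.mp (hA j)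

/-- The set `S_τ` of `{0,1}`-vectors of length `m` with at most `τ·m` ones. -/
def selVecs (m : ℕ) (τ : ℝ) : Set (Fin m → ℝ) :=
  {s | (∀ i, s i = 0 ∨ s i = 1) ∧ ∑ i, s i ≤ τ * m}

/-- The Euclidean unit ball `B₂ⁿ ⊂ ℝⁿ`. -/
def unitBall (n : ℕ) : Set (Euc n) :=
  {v | ‖v‖ ≤ 1}

/-- A process `(Y_t)_{t ∈ T}` has *mixed tail increments* with respect to a pair of
metrics `(d₁, d₂)`: there are constants `c, C > 0` with
`P(|Y_s − Y_t| ≥ c(√u d₂(s,t) + u d₁(s,t))) ≤ C e^{−u}` for all `s,t,u`. -/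
def HasMixedTailIncrements {Ω T : Type*} [MeasurableSpace Ω] (P : Measure Ω)
    (Y : T → Ω → ℝ) (d₁ d₂ : T → T → ℝ) : Prop :=
  ∃ c C : ℝ, 0 < c ∧ 0 < C ∧ ∀ s t : T, ∀ u : ℝ, 0 < u →
    P {ω | c * (Real.sqrt u * d₂ s t + u * d₁ s t) ≤ |Y s ω - Y t ω|} ≤
      ENNReal.ofReal (C * Real.exp (-u))

/-- An admissible sequence of subsets: `|T₀| = 1` and `|T_k| ≤ 2^(2^k)` for `k ≥ 1`
(the sets are taken nonempty so that distances to them are meaningful). -/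
def Admissible {T : Type*} (Ts : ℕ → Finset T) : Prop :=
  (Ts 0).card = 1 ∧ (∀ k, 1 ≤ k → (Ts k).card ≤ 2 ^ 2 ^ k) ∧ ∀ k, (Ts k).Nonempty

/-- The distance from a point to a finite set, for an abstract metric `d`. -/
def distToFinset {T : Type*} (d : T → T → ℝ) (t : T) (S : Finset T) : ℝ :=
  sInf ((fun u => d t u) '' (S : Set T))

/-- Talagrand's `γ_α` functional of a metric space `(T, d)` (here `T` is a type and
`d` an abstract metric on it): `γ_α(T,d) = inf_{(T_k)} sup_t Σ_k 2^{k/α} d(t, T_k)`,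
the infimum being over admissible sequences. -/
def gammaFunctional {T : Type*} (α : ℝ) (d : T → T → ℝ) : ℝ :=
  ⨅ Ts : {Ts : ℕ → Finset T // Admissible Ts},
    ⨆ t : T, ∑' k : ℕ, (2 : ℝ) ^ ((k : ℝ) / α) * distToFinset d t ((Ts : ℕ → Finset T) k)

end

/-! On the cone `angle x z < θ` one Kaczmarz step contracts `‖z - x‖²` in mean by `1 - α/n`:
`‖Pz - x‖²` equals the error of the orthogonal projection onto `a⊥` except on the wedge
`W_{x,z}`, where it exceeds it by at most `4⟪a, z - x⟫²`, and ACW bounds the resulting quadratic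
form `E[aaᵀ] - 4 E[aaᵀ 1_W]` from below. Freeze the chain once it leaves the cone. Then
`‖z - x‖² 1_cone(z)` shrinks in mean by `1 - α/n` per step and `‖z - x‖²` does not grow, since
`a_k` is independent of the past (Tonelli in `ℝ≥0∞`, no integrability needed). On `Ω` the frozen
and the free chain agree, which gives the first bound; outside the cone `‖z - x‖ ≥ ‖x‖ sin θ`,
so Markov's inequality applied to the frozen chain gives the second. -/

section Integrals

variable {Ω : Type*} [MeasurableSpace Ω] {P : Measure Ω}

lemma integral_le_of_lintegral_ofReal_le {f : Ω → ℝ} {b : ℝ} (hf : 0 ≤ᵐ[P] f) (hb : 0 ≤ b)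
    (h : ∫⁻ ω, ENNReal.ofReal (f ω) ∂P ≤ ENNReal.ofReal b) : ∫ ω, f ω ∂P ≤ b := by
  by_cases hint : Integrable f P
  · rwa [← ofReal_integral_eq_lintegral_ofReal hint hf, ENNReal.ofReal_le_ofReal_iff hb] at h
  · rwa [integral_undef hint]

lemma measure_le_ofReal_div_of_lintegral_le {f : Ω → ℝ≥0∞} (hf : AEMeasurable f P) {s : Set Ω}
    {a b : ℝ} (ha : 0 < a) (hs : ∀ ω ∈ s, ENNReal.ofReal a ≤ f ω)
    (hb : ∫⁻ ω, f ω ∂P ≤ ENNReal.ofReal b) : P s ≤ ENNReal.ofReal (b / a) := by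
  rw [ENNReal.ofReal_div_of_pos ha, ENNReal.le_div_iff_mul_le (Or.inl (by simpa using ha))
    (Or.inl ENNReal.ofReal_ne_top), mul_comm]
  exact (mul_le_mul_right (measure_mono hs) _).trans ((mul_meas_ge_le_lintegral₀ hf _).trans hb)

end Integrals

section MarkovChain

variable {β γ : Type*}

def markovChain (T : γ → β → β) (y₀ : β) (a : ℕ → γ) : ℕ → β
  | 0 => y₀
  | k + 1 => T (a k) (markovChain T y₀ a k)

open scoped Classical in
noncomputable def stopStep (S : Set β) (T : γ → β → β) (a : γ) (z : β) : β :=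
  if z ∈ S then T a z else z

variable {S : Set β} {T : γ → β → β} {y₀ : β} {a : ℕ → γ}

lemma markovChain_stopStep_of_forall_lt_mem {k : ℕ}
    (h : ∀ j < k, markovChain T y₀ a j ∈ S) :
    markovChain (stopStep S T) y₀ a k = markovChain T y₀ a k := by
  induction k with
  | zero => rfl
  | succ k ih =>
    show stopStep S T (a k) (markovChain (stopStep S T) y₀ a k) = T (a k) (markovChain T y₀ a k)
    rw [ih fun j hj => h j (by omega), stopStep, if_pos (h k k.lt_succ_self)]

lemma markovChain_stopStep_notMem_of_le {k m : ℕ} (hkm : k ≤ m)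
    (hk : markovChain (stopStep S T) y₀ a k ∉ S) :
    markovChain (stopStep S T) y₀ a m ∉ S := by
  induction m, hkm using Nat.le_induction with
  | base => exact hk
  | succ m _ ih => simpa only [markovChain, stopStep, if_neg ih] using ih

lemma exists_markovChain_stopStep_notMem {j : ℕ} (hj : markovChain T y₀ a j ∉ S) :
    ∃ k, markovChain (stopStep S T) y₀ a k ∉ S := by
  classical
  have hex : ∃ j, markovChain T y₀ a j ∉ S := ⟨j, hj⟩
  refine ⟨Nat.find hex, ?_⟩
  rw [markovChain_stopStep_of_forall_lt_mem fun i hi => not_not.1 (Nat.find_min hex hi)]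
  exact Nat.find_spec hex

variable [MeasurableSpace β] [MeasurableSpace γ]

lemma measurable_uncurry_stopStep (hS : MeasurableSet S) (hT : Measurable (Function.uncurry T)) :
    Measurable (Function.uncurry (stopStep S T)) :=
  Measurable.ite (measurable_snd hS) hT measurable_snd

variable {Ω : Type*} {A : ℕ → Ω → γ}

lemma measurable_markovChain_iSup_comap (hT : Measurable (Function.uncurry T)) (k : ℕ) :
    Measurable[⨆ j ∈ Set.Iio k, MeasurableSpace.comap (A j) ‹_›]
      fun ω => markovChain T y₀ (fun i => A i ω) k := by
  induction k with
  | zero => exact measurable_const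
  | succ k ih =>
    have hA : Measurable[⨆ j ∈ Set.Iio (k + 1), MeasurableSpace.comap (A j) ‹_›] (A k) :=
      measurable_iff_comap_le.2 <| le_iSup₂ (f := fun j (_ : j ∈ Set.Iio (k + 1)) =>
        MeasurableSpace.comap (A j) ‹_›) k k.lt_succ_self
    have hY := ih.mono (biSup_mono fun j hj => lt_trans hj k.lt_succ_self) le_rfl
    exact hT.comp (hA.prodMk hY)

variable [MeasurableSpace Ω] {P : Measure Ω}

lemma measurable_markovChain (hA : ∀ i, Measurable (A i)) (hT : Measurable (Function.uncurry T))
    (k : ℕ) : Measurable fun ω => markovChain T y₀ (fun i => A i ω) k :=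
  (measurable_markovChain_iSup_comap hT k).mono (iSup₂_le fun j _ => (hA j).comap_le) le_rfl

lemma indepFun_markovChain (hA : ∀ i, Measurable (A i)) (hindep : iIndepFun A P)
    (hT : Measurable (Function.uncurry T)) (k : ℕ) :
    IndepFun (fun ω => markovChain T y₀ (fun i => A i ω) k) (A k) P := by
  have h := indep_iSup_of_disjoint (fun i => (hA i).comap_le) hindep.iIndep
    (S := Set.Iio k) (T := {k}) (by simp)
  rw [IndepFun_iff_Indep]
  exact indep_of_indep_of_le_right
    (indep_of_indep_of_le_left h
      (measurable_iff_comap_le.1 (measurable_markovChain_iSup_comap hT k)))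
    (le_iSup₂ (f := fun j (_ : j ∈ ({k} : Set ℕ)) => MeasurableSpace.comap (A j) ‹_›) k rfl)

lemma lintegral_comp_prod_of_indepFun [IsFiniteMeasure P] {V : Ω → β} {Y : Ω → γ}
    (hV : Measurable V) (hY : Measurable Y) (hVY : IndepFun V Y P) {F : β × γ → ℝ≥0∞}
    (hF : Measurable F) :
    ∫⁻ ω, F (V ω, Y ω) ∂P = ∫⁻ ω, ∫⁻ y, F (V ω, y) ∂(P.map Y) ∂P := by
  rw [← lintegral_map hF (hV.prodMk hY),
    (indepFun_iff_map_prod_eq_prod_map_map hV.aemeasurable hY.aemeasurable).1 hVY,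
    lintegral_prod _ hF.aemeasurable, lintegral_map hF.lintegral_prod_right' hV]

theorem lintegral_markovChain_le [IsProbabilityMeasure P] {μ : Measure γ}
    (hA : ∀ i, Measurable (A i)) (hindep : iIndepFun A P) (hdist : ∀ i, P.map (A i) = μ)
    (hT : Measurable (Function.uncurry T)) {f : β → ℝ≥0∞} (hf : Measurable f) {c : ℝ≥0∞}
    (hstep : ∀ z, ∫⁻ a, f (T a z) ∂μ ≤ c * f z) (k : ℕ) :
    ∫⁻ ω, f (markovChain T y₀ (fun i => A i ω) k) ∂P ≤ c ^ k * f y₀ := by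
  induction k with
  | zero => simp [markovChain]
  | succ k ih =>
    set Y := fun ω => markovChain T y₀ (fun i => A i ω) k
    have hY : Measurable Y := measurable_markovChain hA hT k
    calc ∫⁻ ω, f (markovChain T y₀ (fun i => A i ω) (k + 1)) ∂P
        = ∫⁻ ω, ∫⁻ a, f (T a (Y ω)) ∂μ ∂P := by
          rw [← hdist k]
          exact lintegral_comp_prod_of_indepFun hY (hA k) (indepFun_markovChain hA hindep hT k)
            (hf.comp (hT.comp measurable_swap))
      _ ≤ ∫⁻ ω, c * f (Y ω) ∂P := lintegral_mono fun ω => hstep (Y ω)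
      _ = c * ∫⁻ ω, f (Y ω) ∂P := lintegral_const_mul c (hf.comp hY)
      _ ≤ c * (c ^ k * f y₀) := by gcongr
      _ = c ^ (k + 1) * f y₀ := by ring

end MarkovChain

open InnerProductGeometry

section InnerProductSpace

variable {E : Type*} [NormedAddCommGroup E]

lemma edist_sq_eq_ofReal (y x : E) : edist y x ^ 2 = ENNReal.ofReal (‖y - x‖ ^ 2) := by
  rw [edist_dist, dist_eq_norm, ENNReal.ofReal_pow (norm_nonneg _)]

variable [InnerProductSpace ℝ E]

lemma sq_mul_sin_le_norm_sub_sq {x z : E} {θ : ℝ} (hθ : 0 ≤ θ) (h : θ ≤ angle x z) :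
    (‖x‖ * Real.sin θ) ^ 2 ≤ ‖z - x‖ ^ 2 := by
  have hcos : Real.cos (angle x z) ≤ Real.cos θ :=
    Real.cos_le_cos_of_nonneg_of_le_pi hθ (angle_le_pi x z) h
  have hnorm : ‖z - x‖ ^ 2 = ‖z‖ ^ 2 - 2 * (Real.cos (angle x z) * (‖x‖ * ‖z‖)) + ‖x‖ ^ 2 := by
    rw [norm_sub_sq_real, real_inner_comm, cos_angle_mul_norm_mul_norm]
  rw [hnorm]
  nlinarith [sq_nonneg (‖z‖ - Real.cos θ * ‖x‖), Real.sin_sq_add_cos_sq θ,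
    mul_le_mul_of_nonneg_right hcos (mul_nonneg (norm_nonneg x) (norm_nonneg z))]

def angularCone (x : E) (θ : ℝ) : Set E :=
  {z | angle x z < θ}

variable [MeasurableSpace E] [OpensMeasurableSpace E]

lemma measurable_angle_right (x : E) : Measurable (angle x) :=
  Real.continuous_arccos.measurable.comp
    ((continuous_const.inner continuous_id).measurable.div
      (continuous_const.mul continuous_norm).measurable)

lemma measurableSet_angularCone (x : E) (θ : ℝ) : MeasurableSet (angularCone x θ) :=
  measurableSet_lt (measurable_angle_right x) measurable_const

end InnerProductSpace

lemma sgn_mul_abs (t : ℝ) : sgn t * |t| = t := by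
  unfold sgn; split_ifs with h
  · rw [abs_of_nonneg h, one_mul]
  · rw [abs_of_neg (not_le.1 h)]; ring

lemma sq_sgn_mul_abs_sub_le {s t : ℝ} (h : sgn s ≠ sgn t) :
    (sgn t * |s| - s) ^ 2 ≤ 4 * (t - s) ^ 2 := by
  unfold sgn at *
  split_ifs at * <;> (try simp only [not_le] at *) <;> first
    | exact absurd rfl h
    | nlinarith [abs_of_nonneg ‹0 ≤ s›]
    | nlinarith [abs_of_neg ‹s < 0›]

@[fun_prop]
lemma measurable_sgn : Measurable sgn :=
  Measurable.ite (measurableSet_le measurable_const measurable_id) measurable_const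
    measurable_const

section Covariance

variable {n : ℕ}

lemma quadForm_sub_smul (M N : Matrix (Fin n) (Fin n) ℝ) (c : ℝ) (w : Euc n) :
    quadForm (M - c • N) w = quadForm M w - c * quadForm N w := by
  simp only [quadForm, Finset.mul_sum, ← Finset.sum_sub_distrib]
  refine Finset.sum_congr rfl fun i _ => Finset.sum_congr rfl fun j _ => ?_
  simp only [Matrix.sub_apply, Matrix.smul_apply, smul_eq_mul]
  ring

lemma quadForm_smul_right (M : Matrix (Fin n) (Fin n) ℝ) (c : ℝ) (w : Euc n) :
    quadForm M (c • w) = c ^ 2 * quadForm M w := by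
  simp only [quadForm, PiLp.smul_apply, smul_eq_mul, Finset.mul_sum]
  refine Finset.sum_congr rfl fun i _ => Finset.sum_congr rfl fun j _ => ?_
  ring

lemma lamMin_le_quadForm (M : Matrix (Fin n) (Fin n) ℝ) {u : Euc n} (hu : ‖u‖ = 1) :
    lamMin M ≤ quadForm M u := by
  have hcont : Continuous (quadForm M) := by unfold quadForm; fun_prop
  have hbdd := (isCompact_sphere (0 : Euc n) 1).bddBelow_image hcont.continuousOn
  have hrange : Set.range (fun v : {v : Euc n // ‖v‖ = 1} => quadForm M v) ⊆
      quadForm M '' Metric.sphere 0 1 := by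
    rintro _ ⟨v, rfl⟩
    exact ⟨v, by simpa using v.2, rfl⟩
  exact ciInf_le (hbdd.mono hrange) ⟨u, hu⟩

lemma mul_sq_norm_le_quadForm {M : Matrix (Fin n) (Fin n) ℝ} {c : ℝ} (hc : c ≤ lamMin M)
    (w : Euc n) : c * ‖w‖ ^ 2 ≤ quadForm M w := by
  rcases eq_or_ne w 0 with rfl | hw
  · simp [quadForm]
  have hu : ‖(‖w‖⁻¹ • w : Euc n)‖ = 1 := norm_smul_inv_norm hw
  calc c * ‖w‖ ^ 2 ≤ quadForm M (‖w‖⁻¹ • w) * ‖w‖ ^ 2 := by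
        gcongr; exact hc.trans (lamMin_le_quadForm M hu)
    _ = quadForm M w := by
        rw [quadForm_smul_right, inv_pow, mul_comm, ← mul_assoc,
          mul_inv_cancel₀ (by positivity), one_mul]

variable {μ : Measure (Euc n)}

lemma integrable_of_continuous_of_ae_mem_sphere [IsFiniteMeasure μ]
    (hsupp : ∀ᵐ a ∂μ, a ∈ Metric.sphere (0 : Euc n) 1) {g : Euc n → ℝ} (hg : Continuous g) :
    Integrable g μ := by
  rw [← Measure.restrict_eq_self_of_ae_mem hsupp]
  exact hg.continuousOn.integrableOn_compact (isCompact_sphere 0 1)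

lemma quadForm_covMat (hint : ∀ i j, Integrable (fun a : Euc n => a i * a j) μ) (w : Euc n) :
    quadForm (covMat μ) w = ∫ a, ⟪a, w⟫ ^ 2 ∂μ := by
  have hsum : ∀ a : Euc n, ⟪a, w⟫ ^ 2 = ∑ i, ∑ j, w i * (a i * a j) * w j := by
    intro a
    simp only [PiLp.inner_apply, RCLike.inner_apply, conj_trivial, sq, Finset.sum_mul_sum]
    refine Finset.sum_congr rfl fun i _ => Finset.sum_congr rfl fun j _ => ?_
    ring
  have hterm : ∀ i j, Integrable (fun a : Euc n => w i * (a i * a j) * w j) μ :=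
    fun i j => ((hint i j).const_mul _).mul_const _
  simp_rw [hsum]
  rw [integral_finsetSum _ fun i _ => integrable_finsetSum _ fun j _ => hterm i j]
  refine Finset.sum_congr rfl fun i _ => ?_
  rw [integral_finsetSum _ fun j _ => hterm i j]
  refine Finset.sum_congr rfl fun j _ => ?_
  rw [integral_mul_const, integral_const_mul]
  rfl

lemma quadForm_covMat_sub_smul_covMatOn [IsFiniteMeasure μ]
    (hsupp : ∀ᵐ a ∂μ, a ∈ Metric.sphere (0 : Euc n) 1) (c : ℝ) (W : Set (Euc n)) (w : Euc n) :
    quadForm (covMat μ - c • covMatOn μ W) w =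
      ∫ a, ⟪a, w⟫ ^ 2 ∂μ - c * ∫ a in W, ⟪a, w⟫ ^ 2 ∂μ := by
  have hint : ∀ i j, Integrable (fun a : Euc n => a i * a j) μ := fun i j =>
    integrable_of_continuous_of_ae_mem_sphere hsupp (by fun_prop)
  rw [quadForm_sub_smul, quadForm_covMat hint, show covMatOn μ W = covMat (μ.restrict W) from rfl,
    quadForm_covMat fun i j => (hint i j).restrict]

lemma ACW.mul_sq_norm_le [IsFiniteMeasure μ] (hsupp : ∀ᵐ a ∂μ, a ∈ Metric.sphere (0 : Euc n) 1)
    {θ α : ℝ} (hACW : ACW μ θ α) {x z : Euc n} (hx : x ≠ 0) (hz : z ≠ 0) (hxz : angle x z < θ)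
    (w : Euc n) :
    α / n * ‖w‖ ^ 2 ≤ ∫ a, ⟪a, w⟫ ^ 2 ∂μ - 4 * ∫ a in wedge x z, ⟪a, w⟫ ^ 2 ∂μ := by
  rw [← quadForm_covMat_sub_smul_covMatOn hsupp]
  exact mul_sq_norm_le_quadForm (hACW x z hx hz hxz) w

lemma ACW.div_le_one [IsProbabilityMeasure μ] (hsupp : ∀ᵐ a ∂μ, a ∈ Metric.sphere (0 : Euc n) 1)
    {θ α : ℝ} (hACW : ACW μ θ α) (hθ : 0 < θ) {x : Euc n} (hx : x ≠ 0) : α / n ≤ 1 := by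
  set u : Euc n := ‖x‖⁻¹ • x
  have hu : ‖u‖ = 1 := norm_smul_inv_norm hx
  have h := hACW.mul_sq_norm_le hsupp hx hx (by rwa [angle_self hx]) u
  have hsq : ∫ a, ⟪a, u⟫ ^ 2 ∂μ ≤ ∫ _, (1 : ℝ) ∂μ := by
    refine integral_mono_ae (integrable_of_continuous_of_ae_mem_sphere hsupp (by fun_prop))
      (integrable_const 1) (hsupp.mono fun a ha => ?_)
    have := abs_real_inner_le_norm a u
    rw [hu, mem_sphere_zero_iff_norm.1 ha, mul_one] at this
    exact sq_le_one_iff_abs_le_one _ |>.2 this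
  have hW : 0 ≤ ∫ a in wedge x x, ⟪a, u⟫ ^ 2 ∂μ := integral_nonneg fun _ => sq_nonneg _
  rw [hu] at h
  simp only [integral_const, probReal_univ, smul_eq_mul, mul_one] at hsq
  linarith

end Covariance

section Kaczmarz

variable {n : ℕ} {μ : Measure (Euc n)}

lemma measurable_uncurry_kacStep (x : Euc n) : Measurable (Function.uncurry (kacStep x)) := by
  unfold kacStep Function.uncurry
  fun_prop

lemma measurableSet_wedge (x z : Euc n) : MeasurableSet (wedge x z) :=
  Metric.isClosed_sphere.measurableSet.inter
    (measurableSet_eq_fun (by fun_prop) (by fun_prop)).compl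

lemma norm_kacStep_sub_sq (x a z : Euc n) (ha : ‖a‖ = 1) :
    ‖kacStep x a z - x‖ ^ 2 =
      ‖z - x‖ ^ 2 - ⟪a, z - x⟫ ^ 2 + (sgn ⟪a, z⟫ * |⟪a, x⟫| - ⟪a, x⟫) ^ 2 := by
  have h : kacStep x a z - x = (z - x) + (sgn ⟪a, z⟫ * |⟪a, x⟫| - ⟪a, z⟫) • a := by
    unfold kacStep; abel
  rw [h, norm_add_sq_real, real_inner_smul_right, norm_smul, ha, mul_one, Real.norm_eq_abs,
    sq_abs, real_inner_comm a, inner_sub_right]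
  ring

lemma norm_kacStep_sub_sq_le (x a z : Euc n) (ha : ‖a‖ = 1) :
    ‖kacStep x a z - x‖ ^ 2 ≤
      ‖z - x‖ ^ 2 - ⟪a, z - x⟫ ^ 2 + (wedge x z).indicator (fun v => 4 * ⟪v, z - x⟫ ^ 2) a := by
  rw [norm_kacStep_sub_sq x a z ha, add_le_add_iff_left]
  by_cases hs : sgn ⟪a, x⟫ = sgn ⟪a, z⟫
  · rw [← hs, sgn_mul_abs, sub_self, sq, zero_mul]
    exact Set.indicator_nonneg (fun v _ => by positivity) a
  · rw [Set.indicator_of_mem (show a ∈ wedge x z from ⟨by simpa using ha, hs⟩), inner_sub_right]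
    exact sq_sgn_mul_abs_sub_le hs

lemma lintegral_kacStep_le [IsProbabilityMeasure μ]
    (hsupp : ∀ᵐ a ∂μ, a ∈ Metric.sphere (0 : Euc n) 1) {θ α : ℝ} (hACW : ACW μ θ α)
    (hθ' : θ ≤ Real.pi / 2) {x z : Euc n} (hx : x ≠ 0) (hz : angle x z < θ) :
    ∫⁻ a, edist (kacStep x a z) x ^ 2 ∂μ ≤ ENNReal.ofReal (1 - α / n) * edist z x ^ 2 := by
  have hz0 : z ≠ 0 := by
    rintro rfl
    rw [angle_zero_right] at hz
    linarith
  set w := z - x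
  set h : Euc n → ℝ := fun a => ‖w‖ ^ 2 - ⟪a, w⟫ ^ 2 +
    (wedge x z).indicator (fun v => 4 * ⟪v, w⟫ ^ 2) a
  have hle : ∀ᵐ a ∂μ, ‖kacStep x a z - x‖ ^ 2 ≤ h a :=
    hsupp.mono fun a ha => norm_kacStep_sub_sq_le x a z (by simpa using ha)
  have hsq : Integrable (fun a => ⟪a, w⟫ ^ 2) μ :=
    integrable_of_continuous_of_ae_mem_sphere hsupp (by fun_prop)
  have hW : Integrable ((wedge x z).indicator (fun v => 4 * ⟪v, w⟫ ^ 2)) μ :=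
    (hsq.const_mul 4).indicator (measurableSet_wedge x z)
  have hsub : Integrable (fun a => ‖w‖ ^ 2 - ⟪a, w⟫ ^ 2) μ := (integrable_const _).sub hsq
  have hint : Integrable h μ := hsub.add hW
  have hh : ∫ a, h a ∂μ ≤ (1 - α / n) * ‖w‖ ^ 2 := by
    have := hACW.mul_sq_norm_le hsupp hx hz0 hz w
    rw [integral_add hsub hW, integral_sub (integrable_const _) hsq,
      integral_const, integral_indicator (measurableSet_wedge x z), integral_const_mul]
    simp only [probReal_univ, smul_eq_mul, one_mul]
    linarith
  simp only [edist_sq_eq_ofReal]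
  calc ∫⁻ a, ENNReal.ofReal (‖kacStep x a z - x‖ ^ 2) ∂μ
      ≤ ∫⁻ a, ENNReal.ofReal (h a) ∂μ :=
        lintegral_mono_ae (hle.mono fun a ha => ENNReal.ofReal_le_ofReal ha)
    _ = ENNReal.ofReal (∫ a, h a ∂μ) :=
        (ofReal_integral_eq_lintegral_ofReal hint
          (hle.mono fun a ha => (sq_nonneg _).trans ha)).symm
    _ ≤ ENNReal.ofReal ((1 - α / n) * ‖w‖ ^ 2) := ENNReal.ofReal_le_ofReal hh
    _ = ENNReal.ofReal (1 - α / n) * ENNReal.ofReal (‖w‖ ^ 2) := ENNReal.ofReal_mul' (sq_nonneg _)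

lemma kacIter_eq_markovChain (x : Euc n) (a : ℕ → Euc n) (x0 : Euc n) :
    kacIter x a x0 = markovChain (kacStep x) x0 a := by
  funext k
  induction k with
  | zero => rfl
  | succ k ih => simp only [kacIter, markovChain, ih]

lemma measurable_uncurry_stopStep_kacStep (x : Euc n) (θ : ℝ) :
    Measurable (Function.uncurry (stopStep (angularCone x θ) (kacStep x))) :=
  measurable_uncurry_stopStep (measurableSet_angularCone x θ)
    (measurable_uncurry_kacStep x)

lemma lintegral_indicator_stopStep_kacStep_le [IsProbabilityMeasure μ]
    (hsupp : ∀ᵐ a ∂μ, a ∈ Metric.sphere (0 : Euc n) 1) {θ α : ℝ} (hACW : ACW μ θ α)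
    (hθ' : θ ≤ Real.pi / 2) {x : Euc n} (hx : x ≠ 0) (z : Euc n) :
    ∫⁻ a, (angularCone x θ).indicator (fun y => edist y x ^ 2)
        (stopStep (angularCone x θ) (kacStep x) a z) ∂μ ≤
      ENNReal.ofReal (1 - α / n) * (angularCone x θ).indicator (fun y => edist y x ^ 2) z := by
  by_cases hz : z ∈ angularCone x θ
  · simp only [stopStep, if_pos hz, Set.indicator_of_mem hz]
    exact (lintegral_mono fun a => Set.indicator_le_self _ _ _).trans
      (lintegral_kacStep_le hsupp hACW hθ' hx hz)
  · simp [stopStep, hz]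

lemma lintegral_stopStep_kacStep_le [IsProbabilityMeasure μ]
    (hsupp : ∀ᵐ a ∂μ, a ∈ Metric.sphere (0 : Euc n) 1) {θ α : ℝ} (hα : 0 ≤ α) (hACW : ACW μ θ α)
    (hθ' : θ ≤ Real.pi / 2) {x : Euc n} (hx : x ≠ 0) (z : Euc n) :
    ∫⁻ a, edist (stopStep (angularCone x θ) (kacStep x) a z) x ^ 2 ∂μ ≤ edist z x ^ 2 := by
  by_cases hz : z ∈ angularCone x θ
  · simp only [stopStep, if_pos hz]
    have hr : ENNReal.ofReal (1 - α / n) ≤ 1 :=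
      ENNReal.ofReal_le_one.2 (by linarith [div_nonneg hα n.cast_nonneg])
    calc ∫⁻ a, edist (kacStep x a z) x ^ 2 ∂μ ≤ ENNReal.ofReal (1 - α / n) * edist z x ^ 2 :=
          lintegral_kacStep_le hsupp hACW hθ' hx hz
      _ ≤ edist z x ^ 2 := mul_le_of_le_one_left' hr
  · simp [stopStep, hz]

variable {Ω : Type*} [MeasurableSpace Ω] {P : Measure Ω} [IsProbabilityMeasure P]
  {A : ℕ → Ω → Euc n}

theorem setIntegral_norm_kacIter_sub_sq_le [IsProbabilityMeasure μ]
    (hsupp : ∀ᵐ a ∂μ, a ∈ Metric.sphere (0 : Euc n) 1) {θ α : ℝ} (hθ : 0 < θ)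
    (hθ' : θ ≤ Real.pi / 2) (hACW : ACW μ θ α) {x : Euc n} (hx : x ≠ 0)
    (hmeas : ∀ i, Measurable (A i)) (hindep : iIndepFun A P) (hdist : ∀ i, P.map (A i) = μ)
    (x0 : Euc n) (k : ℕ) :
    ∫ ω in {ω | ∀ j, angle x (kacIter x (fun i => A i ω) x0 j) < θ},
        ‖kacIter x (fun i => A i ω) x0 k - x‖ ^ 2 ∂P ≤ (1 - α / n) ^ k * ‖x0 - x‖ ^ 2 := by
  set C := angularCone x θ
  set Y := fun ω => markovChain (stopStep C (kacStep x)) x0 (fun i => A i ω) k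
  have hr : 0 ≤ 1 - α / n := sub_nonneg.2 (hACW.div_le_one hsupp hθ hx)
  have hf : Measurable (C.indicator fun y => edist y x ^ 2) :=
    (by fun_prop : Measurable fun y : Euc n => edist y x ^ 2).indicator
      (measurableSet_angularCone x θ)
  have hY : ∫⁻ ω, C.indicator (fun y => edist y x ^ 2) (Y ω) ∂P ≤
      ENNReal.ofReal ((1 - α / n) ^ k * ‖x0 - x‖ ^ 2) :=
    calc _ ≤ ENNReal.ofReal (1 - α / n) ^ k * C.indicator (fun y => edist y x ^ 2) x0 :=
          lintegral_markovChain_le hmeas hindep hdist (measurable_uncurry_stopStep_kacStep x θ) hf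
            (lintegral_indicator_stopStep_kacStep_le hsupp hACW hθ' hx) k
      _ ≤ ENNReal.ofReal (1 - α / n) ^ k * edist x0 x ^ 2 := by
          gcongr; exact Set.indicator_le_self _ _ _
      _ = _ := by
          rw [edist_sq_eq_ofReal, ← ENNReal.ofReal_pow hr, ← ENNReal.ofReal_mul (pow_nonneg hr k)]
  refine integral_le_of_lintegral_ofReal_le (ae_of_all _ fun _ => sq_nonneg _)
    (mul_nonneg (pow_nonneg hr k) (sq_nonneg _))
    ((setLIntegral_mono (hf.comp (measurable_markovChain hmeas
      (measurable_uncurry_stopStep_kacStep x θ) k)) fun ω hω => ?_).trans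
      ((setLIntegral_le_lintegral _ _).trans hY))
  have hgood : ∀ j, markovChain (kacStep x) x0 (fun i => A i ω) j ∈ C := fun j => by
    rw [← kacIter_eq_markovChain]; exact hω j
  rw [Function.comp_apply, markovChain_stopStep_of_forall_lt_mem fun j _ => hgood j,
    Set.indicator_of_mem (hgood k), edist_sq_eq_ofReal, kacIter_eq_markovChain]

theorem measure_markovChain_stopStep_kacStep_notMem_le [IsProbabilityMeasure μ]
    (hsupp : ∀ᵐ a ∂μ, a ∈ Metric.sphere (0 : Euc n) 1) {θ α : ℝ} (hα : 0 ≤ α) (hθ : 0 < θ)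
    (hθ' : θ ≤ Real.pi / 2) (hACW : ACW μ θ α) {x : Euc n} (hx : x ≠ 0)
    (hmeas : ∀ i, Measurable (A i)) (hindep : iIndepFun A P) (hdist : ∀ i, P.map (A i) = μ)
    {δ : ℝ} {x0 : Euc n} (hx0 : ‖x0 - x‖ ≤ δ * ‖x‖) (k : ℕ) :
    P {ω | markovChain (stopStep (angularCone x θ) (kacStep x)) x0 (fun i => A i ω) k ∉
        angularCone x θ} ≤ ENNReal.ofReal ((δ / Real.sin θ) ^ 2) := by
  set Y := fun ω => markovChain (stopStep (angularCone x θ) (kacStep x)) x0 (fun i => A i ω) k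
  have hsin : 0 < Real.sin θ := Real.sin_pos_of_pos_of_lt_pi hθ (by linarith [Real.pi_pos])
  have hxsin : 0 < (‖x‖ * Real.sin θ) ^ 2 := by have := norm_pos_iff.2 hx; positivity
  have hg : Measurable fun y : Euc n => edist y x ^ 2 := by fun_prop
  have hY : Measurable Y := measurable_markovChain hmeas (measurable_uncurry_stopStep_kacStep x θ) k
  have hbound : ∫⁻ ω, edist (Y ω) x ^ 2 ∂P ≤ ENNReal.ofReal ((δ * ‖x‖) ^ 2) :=
    calc _ ≤ 1 ^ k * edist x0 x ^ 2 :=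
          lintegral_markovChain_le hmeas hindep hdist (measurable_uncurry_stopStep_kacStep x θ) hg
            (by simpa only [one_mul] using lintegral_stopStep_kacStep_le hsupp hα hACW hθ' hx) k
      _ ≤ _ := by
          rw [one_pow, one_mul, edist_sq_eq_ofReal]
          exact ENNReal.ofReal_le_ofReal (pow_le_pow_left₀ (norm_nonneg _) hx0 2)
  have hk := measure_le_ofReal_div_of_lintegral_le (s := {ω | Y ω ∉ angularCone x θ})
    (hg.comp hY).aemeasurable hxsin (fun ω hω => by
      rw [Function.comp_apply, edist_sq_eq_ofReal]
      exact ENNReal.ofReal_le_ofReal (sq_mul_sin_le_norm_sub_sq hθ.le (not_lt.1 hω))) hbound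
  convert hk using 2
  field_simp

theorem measure_exists_angle_kacIter_ge_le [IsProbabilityMeasure μ]
    (hsupp : ∀ᵐ a ∂μ, a ∈ Metric.sphere (0 : Euc n) 1) {θ α : ℝ} (hα : 0 ≤ α) (hθ : 0 < θ)
    (hθ' : θ ≤ Real.pi / 2) (hACW : ACW μ θ α) {x : Euc n} (hx : x ≠ 0)
    (hmeas : ∀ i, Measurable (A i)) (hindep : iIndepFun A P) (hdist : ∀ i, P.map (A i) = μ)
    {δ : ℝ} {x0 : Euc n} (hx0 : ‖x0 - x‖ ≤ δ * ‖x‖) :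
    P {ω | ∀ j, angle x (kacIter x (fun i => A i ω) x0 j) < θ}ᶜ ≤
      ENNReal.ofReal ((δ / Real.sin θ) ^ 2) := by
  set E := fun k => {ω | markovChain (stopStep (angularCone x θ) (kacStep x)) x0
    (fun i => A i ω) k ∉ angularCone x θ}
  have hescape : {ω | ∀ j, angle x (kacIter x (fun i => A i ω) x0 j) < θ}ᶜ ⊆ ⋃ k, E k :=
    fun ω hω => by
      obtain ⟨j, hj⟩ := not_forall.1 hω
      rw [kacIter_eq_markovChain] at hj
      exact Set.mem_iUnion.2 (exists_markovChain_stopStep_notMem hj)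
  have hmono : Monotone E := fun k m hkm ω hω => markovChain_stopStep_notMem_of_le hkm hω
  calc _ ≤ P (⋃ k, E k) := measure_mono hescape
    _ = ⨆ k, P (E k) := hmono.measure_iUnion
    _ ≤ _ := iSup_le (measure_markovChain_stopStep_kacStep_notMem_le hsupp hα hθ hθ' hACW hx
      hmeas hindep hdist hx0)

end Kaczmarz

theorem linear_convergence_ACW_general {n : ℕ} (μ : Measure (Euc n)) [IsProbabilityMeasure μ]
    (hsupp : ∀ᵐ a ∂μ, a ∈ Metric.sphere (0 : Euc n) 1)
    (θ α : ℝ) (hα : 0 < α) (hθ : 0 < θ) (hθ' : θ < Real.pi / 2) (hACW : ACW μ θ α)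
    (x : Euc n) (hx : x ≠ 0) (δ : ℝ)
    {Ω : Type} [MeasurableSpace Ω] (P : Measure Ω) [IsProbabilityMeasure P]
    (A : ℕ → Ω → Euc n) (hmeas : ∀ i, Measurable (A i))
    (hindep : iIndepFun A P)
    (hdist : ∀ i, Measure.map (A i) P = μ)
    (x0 : Euc n) (hx0 : ‖x0 - x‖ ≤ δ * ‖x‖) :
    (∀ k : ℕ,
      ∫ ω in {ω | ∀ j : ℕ,
          InnerProductGeometry.angle x (kacIter x (fun i => A i ω) x0 j) < θ},
        ‖kacIter x (fun i => A i ω) x0 k - x‖ ^ 2 ∂P ≤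
        (1 - α / n) ^ k * ‖x0 - x‖ ^ 2) ∧
    P {ω | ∀ j : ℕ,
        InnerProductGeometry.angle x (kacIter x (fun i => A i ω) x0 j) < θ}ᶜ ≤
      ENNReal.ofReal ((δ / Real.sin θ) ^ 2) :=
  ⟨setIntegral_norm_kacIter_sub_sq_le hsupp hθ hθ'.le hACW hx hmeas hindep hdist x0,
    measure_exists_angle_kacIter_ge_le hsupp hα.le hθ hθ'.le hACW hx hmeas hindep hdist hx0⟩

/-- **Theorem (Linear convergence for an ACW measure).** Suppose `μ` is an
`ACW(θ, α)` probability measure on `S^{n−1}`, `x ≠ 0`, `δ > 0`, and `x₀` satisfies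
`‖x₀ − x‖ ≤ δ‖x‖` and makes angle less than `θ` with `x`. Let `X_k` be the
generalized randomized Kaczmarz iterates from i.i.d. draws from `μ`, and let `Ω`
be the event that every `X_k` makes angle less than `θ` with `x`. Then
`E[‖X_k − x‖² 1_Ω] ≤ (1 − α/n)^k ‖x₀ − x‖²` for all `k`, and
`P(Ωᶜ) ≤ (δ/sin θ)²`. -/
theorem linear_convergence_ACW {n : ℕ} (μ : Measure (Euc n)) [IsProbabilityMeasure μ]
    (hsupp : ∀ᵐ a ∂μ, a ∈ Metric.sphere (0 : Euc n) 1)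
    (θ α : ℝ) (hα : 0 < α) (hθ : 0 < θ) (hθ' : θ < Real.pi / 2) (hACW : ACW μ θ α)
    (x : Euc n) (hx : x ≠ 0) (δ : ℝ) (hδ : 0 < δ)
    {Ω : Type} [MeasurableSpace Ω] (P : Measure Ω) [IsProbabilityMeasure P]
    (A : ℕ → Ω → Euc n) (hmeas : ∀ i, Measurable (A i))
    (hindep : iIndepFun A P)
    (hdist : ∀ i, Measure.map (A i) P = μ)
    (x0 : Euc n) (hx0 : ‖x0 - x‖ ≤ δ * ‖x‖)
    (hx0θ : InnerProductGeometry.angle x x0 < θ) :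
    (∀ k : ℕ,
      ∫ ω in {ω | ∀ j : ℕ,
          InnerProductGeometry.angle x (kacIter x (fun i => A i ω) x0 j) < θ},
        ‖kacIter x (fun i => A i ω) x0 k - x‖ ^ 2 ∂P ≤
        (1 - α / n) ^ k * ‖x0 - x‖ ^ 2) ∧
    P {ω | ∀ j : ℕ,
        InnerProductGeometry.angle x (kacIter x (fun i => A i ω) x0 j) < θ}ᶜ ≤
      ENNReal.ofReal ((δ / Real.sin θ) ^ 2) :=
  linear_convergence_ACW_general μ hsupp θ α hα hθ hθ' hACW x hx δ P A hmeas hindep hdist x0 hx0
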